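/- Let K be a field, let a, d, f, x ∈ K be nonzero and b, c ∈ K. Then the 3×3 matrix M₁ with rows (0,0,a), (d,0,b), (0,f,c) is conjugate by an element of SL_3(K) to the matrix M₂ with rows (0,0,d), (f,0,a⁻¹bf), (0,a,c), and M₁ is also conjugate by an element of SL_3(K) to the matrix M₃ with rows (0,0,ax²), (dx⁻¹,0,bx), (0,fx⁻¹,c). -/

import Mathlib

open Matrix

namespace Matrix

variable {n : Type*} [Fintype n] [DecidableEq n] {R : Type*} [CommRing R]

theorem inv_mul_mul_eq_of_mul_eq_mul {M N P : Matrix n n R} (hP : IsUnit P.det)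
    (h : M * P = P * N) : P⁻¹ * M * P = N := by
  rw [mul_assoc, h, ← mul_assoc, nonsing_inv_mul _ hP, one_mul]

theorem diagonal_inv_mul_mul_diagonal {K : Type*} [Field K] {v : n → K} (hv : ∀ i, v i ≠ 0)
    (M : Matrix n n K) : (diagonal v)⁻¹ * M * diagonal v = of fun i j => (v i)⁻¹ * M i j * v j := by
  refine inv_mul_mul_eq_of_mul_eq_mul (by simp [Finset.prod_ne_zero_iff, hv]) ?_
  ext i j
  rw [mul_diagonal, diagonal_mul, of_apply, ← mul_assoc, ← mul_assoc, mul_inv_cancel₀ (hv i),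
    one_mul]

end Matrix

theorem stmt12 {K : Type*} [Field K]
    (a d f x : K) (ha : a ≠ 0) (hx : x ≠ 0) (b c : K) :
    (∃ ε : Matrix (Fin 3) (Fin 3) K, ε.det = 1 ∧
      ε⁻¹ * !![0, 0, a; d, 0, b; 0, f, c] * ε = !![0, 0, d; f, 0, a⁻¹ * b * f; 0, a, c]) ∧
    (∃ ε : Matrix (Fin 3) (Fin 3) K, ε.det = 1 ∧
      ε⁻¹ * !![0, 0, a; d, 0, b; 0, f, c] * ε
        = !![0, 0, a * x ^ 2; d * x⁻¹, 0, b * x; 0, f * x⁻¹, c]) := by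
  constructor
  -- The columns of the conjugator are the new basis e₂, e₃, a⁻¹ M₁ e₃.
  · have hdet : (!![0, 0, 1; 1, 0, a⁻¹ * b; 0, 1, a⁻¹ * c] : Matrix (Fin 3) (Fin 3) K).det = 1 := by
      simp [det_fin_three]
    refine ⟨_, hdet, inv_mul_mul_eq_of_mul_eq_mul (by simp [hdet]) ?_⟩
    ext i j
    fin_cases i <;> fin_cases j <;> simp [mul_apply, Fin.sum_univ_three] <;> field_simp
  · have hv : ∀ i, ![x⁻¹, 1, x] i ≠ 0 := by
      intro i; fin_cases i <;> simp [hx]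
    refine ⟨diagonal ![x⁻¹, 1, x], by simp [Fin.prod_univ_three, hx], ?_⟩
    rw [diagonal_inv_mul_mul_diagonal hv]
    ext i j
    fin_cases i <;> fin_cases j <;> simp <;> field_simp
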